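/- First derivative of ψ at the base pressure: let γ > 1, ρ_k > 0, p_k > 0, c_k = √(γp_k/ρ_k) and μ² = (γ−1)/(γ+1), and let ψ be the piecewise function ψ(σ) = (2c_k/(γ−1))·((σ/p_k)^((γ−1)/(2γ)) − 1) for σ ≤ p_k and ψ(σ) = (σ − p_k)·((1−μ²)/(ρ_k(σ + μ²p_k)))^(1/2) for σ > p_k. Then ψ(p_k) = 0 and ψ has derivative ψ′(p_k) = 1/(ρ_k·c_k) at σ = p_k. -/

import Mathlib

/-- The velocity function `ψ` of the Lax-curve parametrisation: rarefaction branch for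
`σ ≤ p`, shock branch for `σ > p`, based at density `ρ` and pressure `p`. -/
noncomputable def laxPsi (γ ρ p : ℝ) (σ : ℝ) : ℝ :=
  if σ ≤ p then
    (2 * Real.sqrt (γ * p / ρ) / (γ - 1)) * ((σ / p) ^ ((γ - 1) / (2 * γ)) - 1)
  else
    (σ - p) * Real.sqrt ((1 - (γ - 1) / (γ + 1)) / (ρ * (σ + ((γ - 1) / (γ + 1)) * p)))

/-!
Both branches vanish at `σ = p`, so `ψ` is differentiable there as soon as the two one-sided
derivatives agree. The rarefaction branch has derivative `2c/(γ-1) · (γ-1)/(2γ) / p = c/(γp)`.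
The shock branch is `(σ - p) · g σ` with `g` continuous, so its derivative is
`g p = √(1/(ργp))`. Both equal `1/(ρc)` because `ρc² = γp`.
-/

open Set

theorem HasDerivAt.ite_le {f g : ℝ → ℝ} {f' a : ℝ} (hf : HasDerivAt f f' a)
    (hg : HasDerivAt g f' a) (hfg : f a = g a) :
    HasDerivAt (fun x => if x ≤ a then f x else g x) f' a := by
  have hleft : HasDerivWithinAt (fun x => if x ≤ a then f x else g x) f' (Iic a) a :=
    hf.hasDerivWithinAt.congr_of_mem (fun x hx => if_pos hx) self_mem_Iic
  have hright : HasDerivWithinAt (fun x => if x ≤ a then f x else g x) f' (Ici a) a := by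
    refine hg.hasDerivWithinAt.congr_of_mem (fun x hx => ?_) self_mem_Ici
    rcases (mem_Ici.mp hx).eq_or_lt with rfl | hlt
    · simp [hfg]
    · exact if_neg hlt.not_ge
  simpa [Iic_union_Ici] using hleft.union hright

theorem hasDerivAt_sub_mul_of_continuousAt {g : ℝ → ℝ} {a : ℝ} (hg : ContinuousAt g a) :
    HasDerivAt (fun x => (x - a) * g x) (g a) a := by
  rw [hasDerivAt_iff_tendsto_slope]
  refine (hg.tendsto.mono_left nhdsWithin_le_nhds).congr' ?_
  filter_upwards [self_mem_nhdsWithin] with x hx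
  rw [slope_def_field, sub_self, zero_mul, sub_zero,
    mul_div_cancel_left₀ _ (sub_ne_zero.mpr hx)]

theorem hasDerivAt_mul_div_rpow_sub_one (A e : ℝ) {p : ℝ} (hp : p ≠ 0) :
    HasDerivAt (fun σ => A * ((σ / p) ^ e - 1)) (A * e / p) p := by
  have hquot : HasDerivAt (fun σ : ℝ => σ / p) (1 / p) p := (hasDerivAt_id p).div_const p
  have hpow := (hquot.rpow_const (p := e) (Or.inl (by simp [hp]))).sub_const 1 |>.const_mul A
  refine hpow.congr_deriv ?_
  rw [div_self hp, Real.one_rpow]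
  ring

section SoundSpeed

variable {γ ρ p : ℝ}

theorem rarefaction_slope_eq (hγ : 1 < γ) (hρ : 0 < ρ) (hp : 0 < p) :
    2 * Real.sqrt (γ * p / ρ) / (γ - 1) * ((γ - 1) / (2 * γ)) / p
      = 1 / (ρ * Real.sqrt (γ * p / ρ)) := by
  have hc_sq : Real.sqrt (γ * p / ρ) ^ 2 = γ * p / ρ := Real.sq_sqrt (by positivity)
  have hγ1 : γ - 1 ≠ 0 := by linarith
  field_simp
  rw [hc_sq]
  field_simp

theorem shock_slope_eq (hγ : 1 < γ) (hρ : 0 < ρ) (hp : 0 < p) :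
    Real.sqrt ((1 - (γ - 1) / (γ + 1)) / (ρ * (p + (γ - 1) / (γ + 1) * p)))
      = 1 / (ρ * Real.sqrt (γ * p / ρ)) := by
  rw [Real.sqrt_eq_iff_mul_self_eq_of_pos (by positivity), div_mul_div_comm,
    mul_mul_mul_comm, Real.mul_self_sqrt (by positivity)]
  have hγ1 : γ + 1 ≠ 0 := by linarith
  field_simp
  rw [eq_div_iff (by linarith)]
  ring

end SoundSpeed

/-- First derivative of `ψ` at the base pressure: `ψ(p_k) = 0` and
`ψ′(p_k) = 1/(ρ_k·c_k)` with `c_k = √(γp_k/ρ_k)`. -/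
theorem laxPsi_value_and_deriv_at_base
    (γ ρk pk ck : ℝ) (hγ : 1 < γ) (hρ : 0 < ρk) (hp : 0 < pk)
    (hck : ck = Real.sqrt (γ * pk / ρk)) :
    laxPsi γ ρk pk pk = 0 ∧
    HasDerivAt (laxPsi γ ρk pk) (1 / (ρk * ck)) pk := by
  subst hck
  have hbase :
      2 * Real.sqrt (γ * pk / ρk) / (γ - 1) * ((pk / pk) ^ ((γ - 1) / (2 * γ)) - 1) = 0 := by
    rw [div_self hp.ne', Real.one_rpow, sub_self, mul_zero]
  have hden : ρk * (pk + (γ - 1) / (γ + 1) * pk) ≠ 0 := by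
    have : 0 < (γ - 1) / (γ + 1) := div_pos (by linarith) (by linarith)
    positivity
  have hcont : ContinuousAt
      (fun σ => Real.sqrt ((1 - (γ - 1) / (γ + 1)) / (ρk * (σ + (γ - 1) / (γ + 1) * pk)))) pk := by
    fun_prop (disch := exact hden)
  refine ⟨by simpa [laxPsi] using hbase, ?_⟩
  refine HasDerivAt.ite_le ?_ ?_ (by simp [hbase])
  · exact (hasDerivAt_mul_div_rpow_sub_one _ _ hp.ne').congr_deriv (rarefaction_slope_eq hγ hρ hp)
  · exact (hasDerivAt_sub_mul_of_continuousAt hcont).congr_deriv (shock_slope_eq hγ hρ hp)
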